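/- Let G be a finite group with λ(G) = 1 and let N = S₁ × ⋯ × S_t be a normal subgroup of G which is an internal direct product of pairwise isomorphic nonabelian simple subgroups S₁, …, S_t. Conjugation by elements of G permutes the set {S₁, …, S_t}; the group of permutations of {S₁, …, S_t} induced in this way by G is soluble. -/

import Mathlib

/-- A group is a (nonempty, internal) direct product of nonabelian simple groups:
there is a nonempty independent family of normal subgroups, each nonabelian simple,
whose join is the whole group. -/
def IsProdOfNonabelianSimple (H : Type*) [Group H] : Prop :=
  ∃ (ι : Type) (S : ι → Subgroup H), Nonempty ι ∧ (∀ i, (S i).Normal) ∧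
    (∀ i, IsSimpleGroup ↥(S i)) ∧ (∀ i, ∃ a b : ↥(S i), a * b ≠ b * a) ∧
    iSupIndep S ∧ (⨆ i, S i) = ⊤

/-- `N` is a normal series for a nonsoluble length witness of parameter `k`:
`1 = N 0 ≤ N 1 ≤ ⋯ ≤ N (2k+1) = G`, all terms normal in `G`, the quotients with even
index soluble and the quotients with odd index (nonempty) direct products of
nonabelian simple groups. -/
def IsNonsolubleSeries {G : Type*} [Group G] (k : ℕ) (N : Fin (2*k+2) → Subgroup G) : Prop :=
  Monotone N ∧ N ⟨0, by omega⟩ = ⊥ ∧ N (Fin.last (2*k+1)) = ⊤ ∧ (∀ i, (N i).Normal) ∧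
  (∀ i : Fin (2*k+1), Even (i : ℕ) →
    ∀ [inst : ((N i.castSucc).subgroupOf (N i.succ)).Normal],
      IsSolvable (↥(N i.succ) ⧸ (N i.castSucc).subgroupOf (N i.succ))) ∧
  (∀ i : Fin (2*k+1), ¬ Even (i : ℕ) →
    ∀ [inst : ((N i.castSucc).subgroupOf (N i.succ)).Normal],
      IsProdOfNonabelianSimple (↥(N i.succ) ⧸ (N i.castSucc).subgroupOf (N i.succ)))

/-- The nonsoluble length `λ(G)`: the minimal number of nonsoluble factors in a normal
series of `G` each of whose quotients either is soluble or is a direct product of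
nonabelian simple groups. -/
noncomputable def nonsolubleLength (G : Type*) [Group G] : ℕ :=
  sInf {k | ∃ N : Fin (2*k+2) → Subgroup G, IsNonsolubleSeries k N}

/-- The Fitting subgroup: the subgroup generated by all nilpotent normal subgroups. -/
def fittingSubgroup (G : Type*) [Group G] : Subgroup G :=
  ⨆ N ∈ {N : Subgroup G | N.Normal ∧ Group.IsNilpotent ↥N}, N

/-- A subgroup is subnormal if it is a member of a chain of successively normal subgroups
reaching the whole group. -/
def Subgroup.IsSubnormal' {G : Type*} [Group G] (K : Subgroup G) : Prop :=
  ∃ (n : ℕ) (C : Fin (n+1) → Subgroup G), Monotone C ∧ C ⟨0, by omega⟩ = K ∧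
    C (Fin.last n) = ⊤ ∧ ∀ i : Fin n, ((C i.castSucc).subgroupOf (C i.succ)).Normal

/-- A group is quasisimple if it is perfect and its quotient by the centre is a
nonabelian simple group. -/
def IsQuasisimple (K : Type*) [Group K] : Prop :=
  commutator K = ⊤ ∧ IsSimpleGroup (K ⧸ Subgroup.center K) ∧
    ∃ a b : K ⧸ Subgroup.center K, a * b ≠ b * a

/-- The generalized Fitting subgroup `F*(G)`: the product of the Fitting subgroup and of
all subnormal quasisimple subgroups. -/
def genFittingSubgroup (G : Type*) [Group G] : Subgroup G :=
  fittingSubgroup G ⊔ ⨆ K ∈ {K : Subgroup G | K.IsSubnormal' ∧ IsQuasisimple ↥K}, K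

/-- The generalized Fitting series: `F*₀(G) = 1` and `F*_{i+1}(G)` is the inverse image of
`F*(G/F*_i(G))` in `G`.  (Every term of the series is in fact normal in `G`, so the junk
value in the impossible `else` branch is never used.) -/
noncomputable def genFittingSeries (G : Type*) [Group G] : ℕ → Subgroup G
  | 0 => ⊥
  | n+1 =>
    letI := Classical.propDecidable (genFittingSeries G n).Normal
    if h : (genFittingSeries G n).Normal then
      haveI := h
      Subgroup.comap (QuotientGroup.mk' (genFittingSeries G n))
        (genFittingSubgroup (G ⧸ genFittingSeries G n))
    else ⊤

/-- The generalized Fitting height `h*(G)`: the least `h` with `F*_h(G) = G`. -/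
noncomputable def genFittingHeight (G : Type*) [Group G] : ℕ :=
  sInf {h | genFittingSeries G h = ⊤}

/-- The Fitting series: `F₀(G) = 1` and `F_{i+1}(G)` is the inverse image of
`F(G/F_i(G))` in `G`. -/
noncomputable def fittingSeries (G : Type*) [Group G] : ℕ → Subgroup G
  | 0 => ⊥
  | n+1 =>
    letI := Classical.propDecidable (fittingSeries G n).Normal
    if h : (fittingSeries G n).Normal then
      haveI := h
      Subgroup.comap (QuotientGroup.mk' (fittingSeries G n))
        (fittingSubgroup (G ⧸ fittingSeries G n))
    else ⊤

/-- The Fitting height `h(G)`: the least `h` with `F_h(G) = G`. -/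
noncomputable def fittingHeight (G : Type*) [Group G] : ℕ :=
  sInf {h | fittingSeries G h = ⊤}

/-- The soluble radical `R(G)`: the largest soluble normal subgroup of a finite group,
here defined as the subgroup generated by all soluble normal subgroups. -/
def solubleRadical (G : Type*) [Group G] : Subgroup G :=
  ⨆ N ∈ {N : Subgroup G | N.Normal ∧ IsSolvable ↥N}, N

/-- A minimal normal subgroup. -/
def IsMinimalNormal {G : Type*} [Group G] (N : Subgroup G) : Prop :=
  N.Normal ∧ N ≠ ⊥ ∧ ∀ M : Subgroup G, M.Normal → M ≤ N → M ≠ ⊥ → M = N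

/-- The socle: the subgroup generated by all minimal normal subgroups. -/
def socle (G : Type*) [Group G] : Subgroup G :=
  ⨆ N ∈ {N : Subgroup G | IsMinimalNormal N}, N

/-- A join of normal subgroups is normal. -/
theorem normal_biSup {G : Type*} [Group G] {s : Set (Subgroup G)}
    (hs : ∀ N ∈ s, N.Normal) : (⨆ N ∈ s, N).Normal := by
  constructor
  intro n hn g
  rw [iSup_subtype'] at hn ⊢
  refine Subgroup.iSup_induction _ (C := fun x => g * x * g⁻¹ ∈ ⨆ N : s, (N : Subgroup G))
      hn (fun N x hx => ?_) (by simpa using Subgroup.one_mem _) (fun x y hx hy => ?_)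
  · exact le_iSup (fun N : s => (N : Subgroup G)) N ((hs N N.2).conj_mem x hx g)
  · simpa [mul_assoc] using Subgroup.mul_mem _ hx hy

/-- An intersection of normal subgroups is normal. -/
theorem normal_biInf {G : Type*} [Group G] {s : Set (Subgroup G)}
    (hs : ∀ N ∈ s, N.Normal) : (⨅ N ∈ s, N).Normal := by
  constructor
  intro n hn g
  simp only [Subgroup.mem_iInf] at hn ⊢
  exact fun N hN => (hs N hN).conj_mem n (hn N hN) g

instance solubleRadical.normal (G : Type*) [Group G] : (solubleRadical G).Normal :=
  normal_biSup fun _ hN => hN.1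

instance socle.normal (G : Type*) [Group G] : (socle G).Normal :=
  normal_biSup fun _ hN => hN.1

open scoped Pointwise

/-! Fix a series `1 ≤ R ≤ L ≤ G` with `R` soluble, `L/R` a product of nonabelian simple groups
and `G/L` soluble. The perfect group `N` lies in `L`, and `N ⊓ R`, a soluble subgroup normalising
each factor `Sᵢ`, centralises `N`. In `L/R` every normal subgroup and its centraliser generate
the whole group, so `L = N ⊔ M` with `⁅M, N⁆ ≤ N ⊓ R`; by the three subgroups lemma `M`
centralises `N = ⁅N, N⁆`. Hence `L` normalises every `Sᵢ`, and the permutation group induced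
by `G` is a quotient of the soluble group `G/L`. That `G` permutes the `Sᵢ` at all is rigidity:
a nonabelian simple subgroup of `N` normalised by `N` is one of the factors. -/

theorem IsSimpleGroup.isPerfect {G : Type*} [Group G] [IsSimpleGroup G]
    (h : ∃ a b : G, a * b ≠ b * a) : Group.IsPerfect G := by
  refine ⟨(Subgroup.commutator_normal ⊤ ⊤).eq_bot_or_eq_top.resolve_left fun hbot => ?_⟩
  obtain ⟨a, b, hab⟩ := h
  exact hab (IsSimpleGroup.comm_iff_isSolvable.mpr ⟨⟨1, by rwa [derivedSeries_one]⟩⟩ a b)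

namespace Subgroup

variable {G : Type*} [Group G]

theorem commutator_le_inf_of_le_normalizer {H K : Subgroup G} (hH : H ≤ normalizer (K : Set G))
    (hK : K ≤ normalizer (H : Set G)) : ⁅H, K⁆ ≤ H ⊓ K := by
  rw [commutator_le]
  intro h hh k hk
  have hkh : k * h⁻¹ * k⁻¹ ∈ H := (mem_normalizer_iff.mp (hK hk) h⁻¹).mp (inv_mem hh)
  have hhk : h * k * h⁻¹ ∈ K := (mem_normalizer_iff.mp (hH hh) k).mp hk
  refine mem_inf.mpr ⟨?_, mul_mem hhk (inv_mem hk)⟩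
  simpa only [commutatorElement_def, mul_assoc] using mul_mem hh hkh

theorem le_centralizer_of_disjoint {H K : Subgroup G} (hH : H ≤ normalizer (K : Set G))
    (hK : K ≤ normalizer (H : Set G)) (hHK : Disjoint H K) : H ≤ centralizer K := by
  rw [← commutator_eq_bot_iff_le_centralizer, ← le_bot_iff]
  exact (commutator_le_inf_of_le_normalizer hH hK).trans hHK.le_bot

theorem disjoint_or_le_of_le_normalizer {H K : Subgroup G} [IsSimpleGroup K]
    (hK : K ≤ normalizer (H : Set G)) : Disjoint H K ∨ K ≤ H := by
  have : (H.subgroupOf K).Normal := normal_subgroupOf_iff_le_normalizer_inf.mpr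
    ((le_inf hK le_normalizer).trans inf_normalizer_le_normalizer_inf)
  rw [← subgroupOf_eq_bot, ← subgroupOf_eq_top]
  exact this.eq_bot_or_eq_top

theorem not_le_centralizer_self (H : Subgroup G) [Nontrivial H] [Group.IsPerfect H] :
    ¬ H ≤ centralizer H := by
  rw [← commutator_eq_bot_iff_le_centralizer, commutator_eq_self]
  exact (nontrivial_iff_ne_bot H).mp inferInstance

theorem le_centralizer_of_isSolvable {A K : Subgroup G} [IsSimpleGroup K] [Group.IsPerfect K]
    [Group.IsSolvable A] (hK : K ≤ normalizer (A : Set G)) (hA : A ≤ normalizer (K : Set G)) :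
    K ≤ centralizer A := by
  rcases disjoint_or_le_of_le_normalizer hK with hdisj | hKA
  · exact le_centralizer_of_disjoint hK hA hdisj.symm
  · have : Group.IsSolvable K :=
      Group.isSolvable_of_isSolvable_injective (f := inclusion hKA) (inclusion_injective hKA)
    exact absurd this (Group.IsPerfect.not_isSolvable K)

theorem exists_eq_of_le_iSup_of_isSimpleGroup {ι : Type*} (S : ι → Subgroup G)
    [∀ i, IsSimpleGroup (S i)] (hS : ∀ i, ⨆ j, S j ≤ normalizer (S i : Set G)) (T : Subgroup G)
    [IsSimpleGroup T] [Group.IsPerfect T] (hT : T ≤ ⨆ j, S j)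
    (hST : ⨆ j, S j ≤ normalizer (T : Set G)) : ∃ j, T = S j := by
  have hdisj_or_eq : ∀ j, Disjoint T (S j) ∨ T = S j := fun j => by
    rcases disjoint_or_le_of_le_normalizer ((le_iSup S j).trans hST) with hdisj | hSjT
    · exact .inl hdisj
    rcases disjoint_or_le_of_le_normalizer (hT.trans (hS j)) with hdisj | hTSj
    · exact absurd (hdisj.eq_bot_of_le hSjT) ((nontrivial_iff_ne_bot _).mp inferInstance)
    · exact .inr (le_antisymm hTSj hSjT)
  by_contra! hne
  refine not_le_centralizer_self T (hT.trans (iSup_le fun j => ?_))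
  exact le_centralizer_of_disjoint ((le_iSup S j).trans hST) (hT.trans (hS j))
    ((hdisj_or_eq j).resolve_right (hne j)).symm

theorem le_centralizer_iSup_of_isSolvable {ι : Type*} (S : ι → Subgroup G)
    [∀ i, IsSimpleGroup (S i)] [∀ i, Group.IsPerfect (S i)] {A : Subgroup G} [A.Normal]
    [Group.IsSolvable A] (hA : ∀ i, A ≤ normalizer (S i : Set G)) :
    A ≤ centralizer (⨆ i, S i : Subgroup G) :=
  le_centralizer_iff.mpr <| iSup_le fun i =>
    le_centralizer_of_isSolvable (normalizer_eq_top (H := A) ▸ le_top) (hA i)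

theorem normalizer_conjAct_smul (c : ConjAct G) (H : Subgroup G) :
    normalizer ((c • H : Subgroup G) : Set G) = c • normalizer (H : Set G) :=
  (map_equiv_normalizer_eq H (MulAut.conj (ConjAct.ofConjAct c))).symm

theorem conjAct_smul_mem_range {ι : Type*} (S : ι → Subgroup G) [∀ i, IsSimpleGroup (S i)]
    [∀ i, Group.IsPerfect (S i)] [(⨆ j, S j).Normal]
    (hS : ∀ i, ⨆ j, S j ≤ normalizer (S i : Set G)) (c : ConjAct G) (i : ι) :
    c • S i ∈ Set.range S := by
  have : IsSimpleGroup (c • S i : Subgroup G) := (equivSMul c (S i)).symm.isSimpleGroup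
  have : Group.IsPerfect (c • S i : Subgroup G) :=
    Group.IsPerfect.ofSurjective (f := (equivSMul c (S i)).toMonoidHom)
      (equivSMul c (S i)).surjective
  have hN : c • ⨆ j, S j = ⨆ j, S j := Normal.conjAct ‹(⨆ j, S j).Normal› c
  obtain ⟨j, hj⟩ := exists_eq_of_le_iSup_of_isSimpleGroup S hS (c • S i)
    (hN ▸ pointwise_smul_le_pointwise_smul_iff.mpr (le_iSup S i))
    (normalizer_conjAct_smul c (S i) ▸ hN ▸ pointwise_smul_le_pointwise_smul_iff.mpr (hS i))
  exact ⟨j, hj.symm⟩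

theorem isPerfect_iSup {ι : Type*} (S : ι → Subgroup G) [∀ i, Group.IsPerfect (S i)] :
    Group.IsPerfect ↥(⨆ i, S i) := by
  rw [isPerfect_iff]
  refine le_antisymm ?_ (iSup_le fun i => ?_)
  · rw [commutator_le]
    exact fun a ha b hb => mul_mem (mul_mem (mul_mem ha hb) (inv_mem ha)) (inv_mem hb)
  · rw [← commutator_eq_self (H := S i)]
    exact commutator_mono (le_iSup S i) (le_iSup S i)

theorem le_of_isPerfect_of_isSolvable_quotient {H L : Subgroup G} [L.Normal] [Group.IsPerfect H]
    [Group.IsSolvable (G ⧸ L)] : H ≤ L := by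
  have : Group.IsPerfect (H.map (QuotientGroup.mk' L)) := Group.IsPerfect.map _
  have : Subsingleton (H.map (QuotientGroup.mk' L)) := not_nontrivial_iff_subsingleton.mp
    fun _ => Group.IsPerfect.not_isSolvable (H.map (QuotientGroup.mk' L)) inferInstance
  rw [← QuotientGroup.ker_mk' L, ← map_eq_bot_iff]
  exact eq_bot_of_subsingleton _

theorem _root_.IsProdOfNonabelianSimple.sup_centralizer_eq_top {Q : Type*} [Group Q]
    (hQ : IsProdOfNonabelianSimple Q) (K : Subgroup Q) [K.Normal] : K ⊔ centralizer K = ⊤ := by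
  obtain ⟨ι, T, -, hTn, hTs, -, -, hT⟩ := hQ
  rw [eq_top_iff, ← hT, iSup_le_iff]
  intro k
  have hTK : T k ≤ normalizer (K : Set Q) := normalizer_eq_top (H := K) ▸ le_top
  have hKT : K ≤ normalizer (T k : Set Q) := (normalizer_eq_top_iff.mpr (hTn k)) ▸ le_top
  rcases disjoint_or_le_of_le_normalizer hTK with hdisj | hle
  · exact le_sup_of_le_right (le_centralizer_of_disjoint hTK hKT hdisj.symm)
  · exact le_sup_of_le_left hle

theorem sup_centralizer_eq_top_of_isProdOfNonabelianSimple {Q : Type*} [Group Q] {π : G →* Q}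
    (hπ : Function.Surjective π) (hQ : IsProdOfNonabelianSimple Q) (N : Subgroup G) [N.Normal]
    [Group.IsPerfect N] (hN : ⁅N ⊓ π.ker, N⁆ = ⊥) : N ⊔ centralizer N = ⊤ := by
  have : (N.map π).Normal := Normal.map inferInstance π hπ
  set M := (centralizer (N.map π : Set Q)).comap π
  have hNM : N ⊔ M = ⊤ := by
    have h := congrArg (comap π) (hQ.sup_centralizer_eq_top (N.map π))
    rwa [← comap_sup_eq π _ _ hπ, comap_map_eq, comap_top, sup_assoc,
      sup_eq_right.mpr (ker_le_comap π _)] at h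
  have hMN : ⁅M, N⁆ ≤ N ⊓ π.ker := by
    refine le_inf (commutator_le_right M N) ?_
    rw [← map_eq_bot_iff, map_commutator, commutator_eq_bot_iff_le_centralizer]
    exact map_comap_le _ _
  have hMNN : ⁅⁅M, N⁆, N⁆ = ⊥ := le_bot_iff.mp ((commutator_mono hMN le_rfl).trans hN.le)
  have hNNM : ⁅⁅N, N⁆, M⁆ = ⊥ :=
    commutator_commutator_eq_bot_of_rotate (commutator_comm N M ▸ hMNN) hMNN
  rw [commutator_eq_self, commutator_eq_bot_iff_le_centralizer, le_centralizer_iff] at hNNM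
  rw [eq_top_iff, ← hNM]
  exact sup_le_sup_left hNNM N

theorem le_sup_centralizer_of_isProdOfNonabelianSimple {L R N : Subgroup G} [R.Normal] [N.Normal]
    [Group.IsPerfect N] (hQ : IsProdOfNonabelianSimple (L ⧸ R.subgroupOf L)) (hNL : N ≤ L)
    (hN : ⁅N ⊓ R, N⁆ = ⊥) : L ≤ N ⊔ centralizer N := by
  have : Group.IsPerfect (N.subgroupOf L) :=
    Group.IsPerfect.ofSurjective (f := (subgroupOfEquivOfLe hNL).symm.toMonoidHom)
      (subgroupOfEquivOfLe hNL).symm.surjective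
  have hN' :
      ⁅N.subgroupOf L ⊓ (QuotientGroup.mk' (R.subgroupOf L)).ker, N.subgroupOf L⁆ = ⊥ := by
    apply map_injective L.subtype_injective
    rw [QuotientGroup.ker_mk', map_commutator, map_inf _ _ _ L.subtype_injective,
      subgroupOf_map_subtype, subgroupOf_map_subtype, inf_of_le_left hNL, inf_left_comm,
      inf_of_le_left hNL, inf_comm, map_bot, hN]
  have h := congrArg (map L.subtype)
    (sup_centralizer_eq_top_of_isProdOfNonabelianSimple (QuotientGroup.mk'_surjective _) hQ _ hN')
  rw [map_sup, subgroupOf_map_subtype, ← MonoidHom.range_eq_map, range_subtype] at h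
  rw [← h]
  refine sup_le_sup inf_le_left ((map_centralizer_le_centralizer_image _ _).trans ?_)
  rw [← coe_map, subgroupOf_map_subtype, inf_of_le_left hNL]

theorem isSolvable_of_isSolvable_quotient_subgroupOf_bot {H K : Subgroup G} (hK : K = ⊥)
    [(K.subgroupOf H).Normal] (h : Group.IsSolvable (H ⧸ K.subgroupOf H)) :
    Group.IsSolvable H := by
  subst hK
  refine Group.isSolvable_of_isSolvable_injective
    (f := QuotientGroup.mk' ((⊥ : Subgroup G).subgroupOf H)) ?_
  rw [← MonoidHom.ker_eq_bot_iff, QuotientGroup.ker_mk', bot_subgroupOf]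

theorem isSolvable_quotient_of_isSolvable_quotient_subgroupOf_top {H K : Subgroup G} (hH : H = ⊤)
    [K.Normal] (h : Group.IsSolvable (H ⧸ K.subgroupOf H)) :
    Group.IsSolvable (G ⧸ K) := by
  subst hH
  refine Group.isSolvable_of_surjective (QuotientGroup.map_surjective_of_surjective
    (K.subgroupOf ⊤) K (⊤ : Subgroup G).subtype ?_ le_rfl)
  intro q
  obtain ⟨g, rfl⟩ := QuotientGroup.mk_surjective q
  exact ⟨⟨g, mem_top g⟩, rfl⟩

end Subgroup

theorem MonoidHom.isSolvable_range_of_le_ker {G H : Type*} [Group G] [Group H] {f : G →* H}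
    {L : Subgroup G} [L.Normal] [Group.IsSolvable (G ⧸ L)] (h : L ≤ f.ker) :
    Group.IsSolvable f.range :=
  Group.isSolvable_of_surjective (QuotientGroup.lift_surjective_of_surjective _ f.rangeRestrict
    f.rangeRestrict_surjective (f.ker_rangeRestrict ▸ h))

theorem exists_monoidHom_perm_of_smul_mem_range {M α ι : Type*} [Group M] [MulAction M α]
    [Finite ι] {S : ι → α} (hS : Function.Injective S)
    (h : ∀ (m : M) i, m • S i ∈ Set.range S) :
    ∃ φ : M →* Equiv.Perm ι, ∀ m i, S (φ m i) = m • S i := by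
  choose f hf using h
  have hinj : ∀ m, Function.Injective (f m) := fun m i j hij =>
    hS (MulAction.injective m (by dsimp only; rw [← hf, ← hf, hij]))
  refine ⟨MonoidHom.mk' (fun m => Equiv.ofBijective (f m)
    (Finite.injective_iff_bijective.mp (hinj m))) fun m n => Equiv.ext fun i => hS ?_, hf⟩
  simp only [Equiv.ofBijective_apply, Equiv.Perm.mul_apply, hf, mul_smul]

theorem exists_series_of_nonsolubleLength_eq_one {G : Type*} [Group G]
    (h : nonsolubleLength G = 1) :
    ∃ (R L : Subgroup G) (_ : R.Normal) (_ : L.Normal), Group.IsSolvable R ∧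
      IsProdOfNonabelianSimple (L ⧸ R.subgroupOf L) ∧ Group.IsSolvable (G ⧸ L) := by
  rw [nonsolubleLength] at h
  have hmem := Nat.sInf_mem (Nat.nonempty_of_pos_sInf (h ▸ Nat.one_pos))
  rw [h] at hmem
  obtain ⟨N, -, hbot, htop, hN, heven, hodd⟩ := hmem
  refine ⟨N 1, N 2, hN 1, hN 2, ?_, hodd 1 (by decide), ?_⟩
  · exact Subgroup.isSolvable_of_isSolvable_quotient_subgroupOf_bot hbot (heven 0 ⟨0, rfl⟩)
  · exact Subgroup.isSolvable_quotient_of_isSolvable_quotient_subgroupOf_top htop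
      (heven 2 ⟨1, rfl⟩)

theorem solvable_induced_permutations_general (G : Type*) [Group G]
    (hG : nonsolubleLength G = 1)
    (t : ℕ) (N : Subgroup G) [N.Normal] (S : Fin t → Subgroup G)
    (hjoin : N = ⨆ i, S i)
    (hSN : ∀ i, ((S i).subgroupOf N).Normal)
    (hindep : iSupIndep S)
    (hsimple : ∀ i, IsSimpleGroup ↥(S i))
    (hnonab : ∀ i, ∃ a b : ↥(S i), a * b ≠ b * a) :
    ∃ P : Subgroup (Equiv.Perm (Fin t)),
      (P : Set (Equiv.Perm (Fin t))) =
        {σ | ∃ g : G, ∀ i, Subgroup.map (MulAut.conj g).toMonoidHom (S i) = S (σ i)} ∧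
      IsSolvable ↥P := by
  obtain ⟨R, L, _, _, hR, hLR, hGL⟩ := exists_series_of_nonsolubleLength_eq_one hG
  subst hjoin
  have hSn : ∀ i, ⨆ j, S j ≤ Subgroup.normalizer (S i : Set G) := fun i =>
    Subgroup.le_normalizer_of_normal_subgroupOf (le_iSup S i)
  have : ∀ i, Group.IsPerfect (S i) := fun i => IsSimpleGroup.isPerfect (hnonab i)
  have : Group.IsPerfect ↥(⨆ i, S i) := Subgroup.isPerfect_iSup S
  have hNL : ⨆ i, S i ≤ L := Subgroup.le_of_isPerfect_of_isSolvable_quotient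
  have : Group.IsSolvable ↥((⨆ i, S i) ⊓ R) :=
    Group.isSolvable_of_isSolvable_injective (Subgroup.inclusion_injective inf_le_right)
  have hNR : ⁅(⨆ i, S i) ⊓ R, ⨆ i, S i⁆ = ⊥ :=
    Subgroup.commutator_eq_bot_iff_le_centralizer.mpr
      (Subgroup.le_centralizer_iSup_of_isSolvable S fun i => inf_le_left.trans (hSn i))
  have hSinj : Function.Injective S :=
    hindep.injective fun i => (Subgroup.nontrivial_iff_ne_bot _).mp inferInstance
  obtain ⟨φ, hφ⟩ := exists_monoidHom_perm_of_smul_mem_range hSinj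
    (Subgroup.conjAct_smul_mem_range S hSn)
  let ψ := φ.comp ConjAct.toConjAct.toMonoidHom
  have hker : ⨅ i, Subgroup.normalizer (S i : Set G) ≤ ψ.ker := fun g hg =>
    Equiv.ext fun i => hSinj ((hφ _ i).trans
      (Subgroup.conjAct_pointwise_smul_eq_self (Subgroup.mem_iInf.mp hg i)))
  have hL : L ≤ ψ.ker := by
    refine (Subgroup.le_sup_centralizer_of_isProdOfNonabelianSimple hLR hNL hNR).trans
      (sup_le (le_iInf hSn) (le_iInf fun i => ?_) |>.trans hker)
    exact (Subgroup.centralizer_le (le_iSup S i)).trans (Subgroup.centralizer_le_normalizer _)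
  refine ⟨ψ.range, Set.ext fun σ => exists_congr fun g => ?_,
    MonoidHom.isSolvable_range_of_le_ker hL⟩
  exact ⟨fun h i => h ▸ (hφ _ i).symm,
    fun h => Equiv.ext fun i => hSinj ((hφ _ i).trans (h i))⟩

/-- If `λ(G) = 1` and `N = S₁ × ⋯ × S_t` is a normal subgroup of `G` which is an internal
direct product of pairwise isomorphic nonabelian simple subgroups, then the group of
permutations induced by conjugation by elements of `G` on `{S₁, …, S_t}` is soluble. -/
theorem solvable_induced_permutations (G : Type*) [Group G] [Finite G]
    (hG : nonsolubleLength G = 1)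
    (t : ℕ) (ht : 0 < t) (N : Subgroup G) [N.Normal] (S : Fin t → Subgroup G)
    (hjoin : N = ⨆ i, S i)
    (hSN : ∀ i, ((S i).subgroupOf N).Normal)
    (hindep : iSupIndep S)
    (hsimple : ∀ i, IsSimpleGroup ↥(S i))
    (hnonab : ∀ i, ∃ a b : ↥(S i), a * b ≠ b * a)
    (hiso : ∀ i j, Nonempty (↥(S i) ≃* ↥(S j))) :
    ∃ P : Subgroup (Equiv.Perm (Fin t)),
      (P : Set (Equiv.Perm (Fin t))) =
        {σ | ∃ g : G, ∀ i, Subgroup.map (MulAut.conj g).toMonoidHom (S i) = S (σ i)} ∧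
      IsSolvable ↥P :=
  solvable_induced_permutations_general G hG t N S hjoin hSN hindep hsimple hnonab
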